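/- Let p, m, n be natural numbers. For each k ∈ {1,…,p}, let the polytope S_k = {y ∈ ℝⁿ : C_k y ≤ c_k} be given by C_k ∈ ℝ^{q_k×n} and c_k ∈ ℝ^{q_k}, and let the affine piece be f_k(y) = A_k y + b_k with A_k ∈ ℝ^{m×n}, b_k ∈ ℝ^{m}. Assume consistency: for all k, j and all y ∈ S_k ∩ S_j, A_k y + b_k = A_j y + b_j (so the piecewise affine function f with f(y) = A_k y + b_k for y ∈ S_k is well defined on S = ∪_k S_k). For x ∈ ℝⁿ define δ_k(x) = ReLU( ∑_{i=1}^{q_k} BSF(−(C_k x)_i + (c_k)_i) − q_k + 1 ) and Y_k(x) = ReLU( δ_k(x) − ∑_{l < k} δ_l(x) ). Then for every x ∈ S and every j ∈ {1,…,m}: ∑_{k=1}^{p} Y_k(x) · (A_k x + b_k)_j = f(x)_j; that is, the multiplication-gated network (YANN-L) exactly represents f on its whole domain without any big-M constant. -/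

import Mathlib

/-- The binary step function: `1` if `t ≥ 0`, `0` otherwise. -/
noncomputable def BSF (t : ℝ) : ℝ := if 0 ≤ t then 1 else 0

/-- The rectified linear unit. -/
def ReLU (t : ℝ) : ℝ := max t 0

/-!
Each gate `δ_k` is an AND of the `q_k` half-space tests `BSF(c_k - C_k x) ∈ {0, 1}`: their sum
minus `q_k - 1` is `1` exactly when all tests pass and `≤ 0` otherwise, so `δ_k = 1_{S_k}`.
Subtracting the earlier gates then leaves `Y_k = 1` only for the first `k` with `x ∈ S_k`,
so the sum selects a single affine piece, which by consistency agrees with any other piece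
active at `x`.
-/

open Finset

lemma BSF_neg_add (a b : ℝ) : BSF (-a + b) = if a ≤ b then 1 else 0 := by
  simp only [BSF, le_neg_add_iff_add_le, add_zero]

lemma ReLU_of_nonpos {t : ℝ} (ht : t ≤ 0) : ReLU t = 0 := max_eq_right ht

lemma ReLU_one : ReLU 1 = 1 := max_eq_left zero_le_one

lemma ReLU_sum_boole_sub_card_add_one {ι : Type*} [Fintype ι] (P : ι → Prop)
    [DecidablePred P] :
    ReLU (∑ i, (if P i then (1 : ℝ) else 0) - Fintype.card ι + 1)
      = if ∀ i, P i then 1 else 0 := by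
  rw [sum_boole]
  split_ifs with hP
  · rw [filter_true_of_mem fun i _ ↦ hP i, card_univ, sub_self, zero_add, ReLU_one]
  · push Not at hP
    obtain ⟨i, hi⟩ := hP
    have hlt : #{i | P i} < Fintype.card ι :=
      card_lt_univ_of_notMem (s := ({i | P i} : Finset ι)) (by simpa using hi)
    apply ReLU_of_nonpos
    have : ((#{i | P i} : ℕ) : ℝ) + 1 ≤ Fintype.card ι := by exact_mod_cast hlt
    linarith

open Classical in
lemma ReLU_boole_sub_sum_Iio_boole {ι : Type*} [Preorder ι] [LocallyFiniteOrderBot ι]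
    (P : ι → Prop) [DecidablePred P] (k : ι) :
    ReLU ((if P k then (1 : ℝ) else 0) - ∑ l ∈ Iio k, if P l then (1 : ℝ) else 0)
      = if Minimal P k then 1 else 0 := by
  have hsum_nonneg : 0 ≤ ∑ l ∈ Iio k, if P l then (1 : ℝ) else 0 :=
    sum_nonneg fun l _ ↦ by split_ifs <;> norm_num
  by_cases hmin : Minimal P k
  · have hsum : ∑ l ∈ Iio k, (if P l then (1 : ℝ) else 0) = 0 :=
      sum_eq_zero fun l hl ↦ if_neg (minimal_iff_forall_lt.mp hmin |>.2 (mem_Iio.mp hl))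
    rw [if_pos hmin.prop, if_pos hmin, hsum, sub_zero, ReLU_one]
  rw [if_neg hmin]
  by_cases hk : P k
  · obtain ⟨l, hlk, hl⟩ : ∃ l < k, P l := by
      simpa [minimal_iff_forall_lt, hk] using hmin
    have hone : (1 : ℝ) ≤ ∑ l ∈ Iio k, if P l then (1 : ℝ) else 0 := by
      simpa [hl] using single_le_sum (f := fun l ↦ if P l then (1 : ℝ) else 0)
        (fun l _ ↦ by split_ifs <;> norm_num) (mem_Iio.mpr hlk)
    rw [if_pos hk]
    exact ReLU_of_nonpos (by linarith)
  · rw [if_neg hk]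
    exact ReLU_of_nonpos (by linarith)

lemma Minimal.eq {α : Type*} [LinearOrder α] {P : α → Prop} {a b : α}
    (ha : Minimal P a) (hb : Minimal P b) : a = b := by
  rcases le_total a b with hab | hba
  · exact hb.eq_of_le ha.prop hab
  · exact (ha.eq_of_le hb.prop hba).symm

theorem yannL_exactly_represents_piecewise_affine (p m n : ℕ)
    (q : Fin p → ℕ)
    (C : ∀ k : Fin p, Matrix (Fin (q k)) (Fin n) ℝ)
    (c : ∀ k : Fin p, Fin (q k) → ℝ)
    (A : Fin p → Matrix (Fin m) (Fin n) ℝ) (b : Fin p → Fin m → ℝ)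
    (S : Fin p → Set (Fin n → ℝ))
    (hS : ∀ k, S k = {y : Fin n → ℝ | ∀ i, (C k).mulVec y i ≤ c k i})
    (hconsist : ∀ (k k' : Fin p), ∀ y ∈ S k ∩ S k',
      (A k).mulVec y + b k = (A k').mulVec y + b k')
    (δ : Fin p → (Fin n → ℝ) → ℝ)
    (hδ : ∀ k x, δ k x
      = ReLU (∑ i, BSF (-((C k).mulVec x i) + c k i) - (q k : ℝ) + 1))
    (Y : Fin p → (Fin n → ℝ) → ℝ)
    (hY : ∀ k x, Y k x = ReLU (δ k x - ∑ l ∈ Finset.Iio k, δ l x)) :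
    ∀ x ∈ ⋃ k : Fin p, S k, ∀ (j : Fin m) (k : Fin p), x ∈ S k →
      ∑ k', Y k' x * ((A k').mulVec x j + b k' j)
        = (A k).mulVec x j + b k j := by
  classical
  intro x hx j k hxk
  obtain ⟨k₀, hk₀⟩ := exists_minimal_of_wellFoundedLT (x ∈ S ·) (Set.mem_iUnion.mp hx)
  have hδ_indicator (l : Fin p) : δ l x = if x ∈ S l then 1 else 0 := by
    rw [hδ, hS]
    simp only [BSF_neg_add, Set.mem_ofPred_eq]
    convert ReLU_sum_boole_sub_card_add_one fun i ↦ (C l).mulVec x i ≤ c l i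
    exact (Fintype.card_fin _).symm
  have hY_first (l : Fin p) : Y l x = if l = k₀ then 1 else 0 := by
    rw [hY, hδ_indicator, sum_congr rfl fun l _ ↦ hδ_indicator l,
      ReLU_boole_sub_sum_Iio_boole (x ∈ S ·)]
    exact if_congr ⟨fun hl ↦ hl.eq hk₀, fun h ↦ h ▸ hk₀⟩ rfl rfl
  simp only [hY_first, ite_mul, one_mul, zero_mul, sum_ite_eq', mem_univ, if_true]
  exact congrFun (hconsist k₀ k x ⟨hk₀.prop, hxk⟩) j
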